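/- Define F_2 = P^- D^{-1} L_k, where D^{-1} v(s) = ∫_{-1}^s v and P^- is the degree-k right Gauss–Radau projection on [-1,1]. Then F_2 = (L_k - L_{k-1})/(2k+1), and consequently F_2(1) = 0 and ‖F_2‖_{L^∞([-1,1])} ≤ 2/(2k+1). -/

import Mathlib

/-
Integrating Rodrigues' formula by parts shows that `L_m` is orthogonal on `[-1, 1]` to every
polynomial of degree `< m`, and a polynomial `p` of degree `≤ m` with this property equals
`p(1) • L_m`. Since `p ↦ ((1 - x²) p')'` is symmetric and does not raise the degree, this yields
Legendre's equation `((1 - x²) L_m')' = -m(m+1) L_m`, hence `L_m'(1) = m(m+1)/2`, and then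
`L_{k+1}' - L_{k-1}' = (2k+1) L_k`, i.e. `D⁻¹ L_k = (L_{k+1} - L_{k-1}) / (2k+1)`. This differs
from `(L_k - L_{k-1}) / (2k+1)` by a multiple of `L_{k+1} - L_k`, and both vanish at `1`, so the
latter is the (unique) Radau projection. For the bound, Sonine's function
`m(m+1) L_m² + (1 - x²) L_m'²` has derivative `2x L_m'²` by Legendre's equation, so on `[-1, 1]`
it is at most its value `m(m+1)` at `±1`, which gives `|L_m| ≤ 1`.
-/

open Polynomial

/-- Legendre polynomial of degree `m` on `[-1,1]`, normalized so `L_m(1) = 1`. -/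
noncomputable def leg (m : ℕ) : Polynomial ℝ :=
  Polynomial.C (((2 : ℝ) ^ m * Nat.factorial m)⁻¹) *
    (fun p => Polynomial.derivative p)^[m] ((Polynomial.X ^ 2 - 1) ^ m)

/-- The antiderivative operator `D⁻¹ v (s) = ∫_{-1}^s v`. -/
noncomputable def Dinv (v : ℝ → ℝ) (s : ℝ) : ℝ := ∫ t in (-1 : ℝ)..s, v t

/-- Degree-`k` right Gauss–Radau projection on `[-1,1]`. -/
def IsRadauNeg (k : ℕ) (v : ℝ → ℝ) (p : Polynomial ℝ) : Prop :=
  p.natDegree ≤ k ∧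
  (∀ w : Polynomial ℝ, w.natDegree + 1 ≤ k →
    ∫ s in (-1 : ℝ)..1, (v s - p.eval s) * w.eval s = 0) ∧
  p.eval 1 = v 1

open Set intervalIntegral

lemma integral_eval_derivative (p : ℝ[X]) (a b : ℝ) :
    ∫ x in a..b, (derivative p).eval x = p.eval b - p.eval a :=
  integral_eq_sub_of_hasDerivAt (fun x _ => p.hasDerivAt x)
    ((derivative p).continuous.intervalIntegrable a b)

lemma intervalIntegrable_eval_mul (p q : ℝ[X]) (a b : ℝ) :
    IntervalIntegrable (fun x => p.eval x * q.eval x) MeasureTheory.volume a b :=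
  (p.continuous.mul q.continuous).intervalIntegrable a b

lemma integral_eval_sub_mul (p q w : ℝ[X]) (a b : ℝ) :
    ∫ x in a..b, (p - q).eval x * w.eval x =
      (∫ x in a..b, p.eval x * w.eval x) - ∫ x in a..b, q.eval x * w.eval x := by
  simp only [eval_sub, sub_mul]
  exact integral_sub (intervalIntegrable_eval_mul p w a b) (intervalIntegrable_eval_mul q w a b)

lemma integral_derivative_mul (p q : ℝ[X]) (a b : ℝ) :
    ∫ x in a..b, (derivative p).eval x * q.eval x =
      p.eval b * q.eval b - p.eval a * q.eval a -
        ∫ x in a..b, p.eval x * (derivative q).eval x := by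
  have h := integral_deriv_mul_eq_sub (fun x _ => p.hasDerivAt x) (fun x _ => q.hasDerivAt x)
    ((derivative p).continuous.intervalIntegrable a b)
    ((derivative q).continuous.intervalIntegrable a b)
  rw [integral_add (intervalIntegrable_eval_mul _ _ a b) (intervalIntegrable_eval_mul _ _ a b)] at h
  linarith

lemma eq_zero_of_integral_eval_mul_self_eq_zero {a b : ℝ} (hab : a < b) {q : ℝ[X]}
    (h : ∫ x in a..b, q.eval x * q.eval x = 0) : q = 0 := by
  by_contra hq
  obtain ⟨c, hc, hqc⟩ : ∃ c ∈ Icc a b, q.eval c ≠ 0 := by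
    by_contra! H
    exact hq (q.eq_zero_of_infinite_isRoot ((Icc_infinite hab).mono H))
  refine (integral_pos hab (q.continuous.mul q.continuous).continuousOn
    (fun x _ => mul_self_nonneg _) ⟨c, hc, mul_self_pos.2 hqc⟩).ne' h

lemma eval_le_max_of_derivative_eq_X_mul {G H : ℝ[X]} (hG : derivative G = X * H)
    (hH : ∀ x, 0 ≤ H.eval x) {a b x : ℝ} (ha : a ≤ 0) (hb : 0 ≤ b) (hx : x ∈ Icc a b) :
    G.eval x ≤ max (G.eval a) (G.eval b) := by
  have hderiv (y : ℝ) : deriv (fun x => G.eval x) y = y * H.eval y := by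
    rw [Polynomial.deriv, hG, eval_mul, eval_X]
  rcases le_total 0 x with hx0 | hx0
  · refine le_max_of_le_right <| monotoneOn_of_deriv_nonneg (convex_Icc 0 b)
      G.continuous.continuousOn G.differentiable.differentiableOn (fun y hy => ?_)
      ⟨hx0, hx.2⟩ ⟨hb, le_rfl⟩ hx.2
    rw [interior_Icc] at hy
    rw [hderiv]
    exact mul_nonneg hy.1.le (hH y)
  · refine le_max_of_le_left <| antitoneOn_of_deriv_nonpos (convex_Icc a 0)
      G.continuous.continuousOn G.differentiable.differentiableOn (fun y hy => ?_)
      ⟨le_rfl, ha⟩ ⟨hx.1, hx0⟩ hx.1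
    rw [interior_Icc] at hy
    rw [hderiv]
    exact mul_nonpos_of_nonpos_of_nonneg hy.2.le (hH y)

lemma eval_iterate_derivative_pow_eq_zero {R : Type*} [CommRing R] {p : R[X]} {x : R}
    (hx : p.eval x = 0) {i m : ℕ} (hi : i < m) : (derivative^[i] (p ^ m)).eval x = 0 := by
  obtain ⟨r, hr⟩ := pow_sub_dvd_iterate_derivative_pow p m i
  rw [hr, eval_mul, eval_pow, hx, zero_pow (by omega), zero_mul]

lemma eval_iterate_derivative_X_sub_C_pow_mul {R : Type*} [CommRing R] (a b : R) (m : ℕ) :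
    (derivative^[m] ((X - C a) ^ m * (X - C b) ^ m)).eval a = m.factorial * (a - b) ^ m := by
  rw [iterate_derivative_mul, eval_finsetSum, Finset.sum_eq_single 0]
  · simp [iterate_derivative_X_sub_pow_self]
  · intro j hj hj0
    have hjm : j ≤ m := Nat.lt_succ_iff.mp (Finset.mem_range.mp hj)
    rw [iterate_derivative_X_sub_pow, Nat.sub_sub_self hjm]
    simp [zero_pow hj0]
  · simp

lemma X_sq_sub_one_pow (m : ℕ) : (X ^ 2 - 1 : ℝ[X]) ^ m = (X - C 1) ^ m * (X - C (-1)) ^ m := by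
  rw [← mul_pow]
  congr 1
  simp only [map_one, map_neg, sub_neg_eq_add]
  ring

lemma leg_eval_one (m : ℕ) : (leg m).eval 1 = 1 := by
  rw [leg, eval_mul, eval_C, X_sq_sub_one_pow, eval_iterate_derivative_X_sub_C_pow_mul,
    show (1 : ℝ) - -1 = 2 by norm_num]
  field_simp

lemma leg_eval_neg_one (m : ℕ) : (leg m).eval (-1) = (-1) ^ m := by
  rw [leg, eval_mul, eval_C, X_sq_sub_one_pow, mul_comm ((X - C 1) ^ m),
    eval_iterate_derivative_X_sub_C_pow_mul, show (-1 : ℝ) - 1 = -2 by norm_num, neg_pow]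
  field_simp

lemma natDegree_X_sq_sub_one_pow (m : ℕ) : ((X ^ 2 - 1 : ℝ[X]) ^ m).natDegree = 2 * m := by
  rw [natDegree_pow, ← C_1, natDegree_X_pow_sub_C, mul_comm]

lemma natDegree_leg_le (m : ℕ) : (leg m).natDegree ≤ m := by
  refine (natDegree_C_mul_le _ _).trans <| (natDegree_iterate_derivative _ _).trans ?_
  rw [natDegree_X_sq_sub_one_pow]
  omega

lemma coeff_leg_self_ne_zero (m : ℕ) : (leg m).coeff m ≠ 0 := by
  have hmonic : ((X ^ 2 - 1 : ℝ[X]) ^ m).Monic := (monic_X_pow_sub_C 1 two_ne_zero).pow m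
  have hlead : ((X ^ 2 - 1 : ℝ[X]) ^ m).coeff (m + m) = 1 := by
    rw [← two_mul, ← natDegree_X_sq_sub_one_pow, hmonic.coeff_natDegree]
  rw [leg, coeff_C_mul, coeff_iterate_derivative, hlead, nsmul_one]
  have : ((m + m).descFactorial m : ℝ) ≠ 0 := by
    exact_mod_cast (Nat.descFactorial_pos.mpr (by omega)).ne'
  exact mul_ne_zero (by positivity) this

lemma integral_iterate_derivative_mul_eq_zero {a b : ℝ} {u w : ℝ[X]} {n : ℕ}
    (hu : ∀ i < n, (derivative^[i] u).eval a = 0 ∧ (derivative^[i] u).eval b = 0)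
    (hw : derivative^[n] w = 0) :
    ∫ x in a..b, (derivative^[n] u).eval x * w.eval x = 0 := by
  induction n generalizing w with
  | zero => simp_all
  | succ n ih =>
    rw [Function.iterate_succ_apply', integral_derivative_mul, (hu n n.lt_succ_self).1,
      (hu n n.lt_succ_self).2, ih (fun i hi => hu i (hi.trans n.lt_succ_self)) hw]
    simp

lemma integral_leg_mul_eq_zero {m : ℕ} {w : ℝ[X]} (hw : derivative^[m] w = 0) :
    ∫ x in (-1 : ℝ)..1, (leg m).eval x * w.eval x = 0 := by
  have hroot {x : ℝ} (hx : x ^ 2 = 1) : (X ^ 2 - 1 : ℝ[X]).eval x = 0 := by simp [hx]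
  simp only [leg, eval_mul, eval_C, mul_assoc]
  rw [integral_const_mul, integral_iterate_derivative_mul_eq_zero (fun i hi =>
    ⟨eval_iterate_derivative_pow_eq_zero (hroot (by norm_num)) hi,
      eval_iterate_derivative_pow_eq_zero (hroot (by norm_num)) hi⟩) hw, mul_zero]

lemma integral_leg_mul_eq_zero_of_natDegree_lt {m : ℕ} {w : ℝ[X]} (hw : w.natDegree < m) :
    ∫ x in (-1 : ℝ)..1, (leg m).eval x * w.eval x = 0 :=
  integral_leg_mul_eq_zero (iterate_derivative_eq_zero hw)

lemma eq_smul_leg_of_orthogonal {m : ℕ} {p : ℝ[X]} (hp : p.natDegree ≤ m)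
    (hperp : ∀ w : ℝ[X], w.natDegree < m → ∫ x in (-1 : ℝ)..1, p.eval x * w.eval x = 0) :
    p = (p.coeff m / (leg m).coeff m) • leg m := by
  set q := p - (p.coeff m / (leg m).coeff m) • leg m
  have hq_coeff : q.coeff m = 0 := by
    simp [q, div_mul_cancel₀ _ (coeff_leg_self_ne_zero m)]
  have hq_natDegree : q.natDegree ≤ m :=
    (natDegree_sub_le _ _).trans (max_le hp ((natDegree_smul_le _ _).trans (natDegree_leg_le m)))
  suffices q = 0 from sub_eq_zero.mp this
  by_contra hq
  have hq_lt : q.natDegree < m := hq_natDegree.lt_of_ne fun h =>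
    hq (leadingCoeff_eq_zero.mp (by rwa [leadingCoeff, h]))
  refine hq (eq_zero_of_integral_eval_mul_self_eq_zero (neg_one_lt_zero.trans one_pos) ?_)
  rw [integral_eval_sub_mul, hperp q hq_lt]
  simp only [eval_smul, smul_eq_mul, mul_assoc]
  rw [integral_const_mul, integral_leg_mul_eq_zero_of_natDegree_lt hq_lt]
  simp

lemma eq_eval_one_smul_leg_of_orthogonal {m : ℕ} {p : ℝ[X]} (hp : p.natDegree ≤ m)
    (hperp : ∀ w : ℝ[X], w.natDegree < m → ∫ x in (-1 : ℝ)..1, p.eval x * w.eval x = 0) :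
    p = p.eval 1 • leg m := by
  have h := eq_smul_leg_of_orthogonal hp hperp
  rw [h, eval_smul, leg_eval_one, smul_eq_mul, mul_one]

noncomputable def legendreOp (p : ℝ[X]) : ℝ[X] := derivative ((1 - X ^ 2) * derivative p)

lemma coeff_legendreOp (p : ℝ[X]) (j : ℕ) :
    (legendreOp p).coeff j = (j + 1) * (j + 2) * p.coeff (j + 2) - j * (j + 1) * p.coeff j := by
  have h : legendreOp p = derivative (derivative p) - derivative (X ^ 2 * derivative p) := by
    rw [legendreOp, ← derivative_sub, sub_mul, one_mul]
  rw [h, coeff_sub, coeff_derivative, coeff_derivative, coeff_derivative, coeff_X_pow_mul']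
  rcases j with _ | j
  · simp only [zero_add, Nat.reduceAdd, Nat.cast_one, CharP.cast_eq_zero, mul_one,
      Nat.not_ofNat_le_one, ↓reduceIte, sub_zero, one_mul, zero_mul]
    ring
  · simp only [Nat.cast_add, Nat.cast_one, le_add_iff_nonneg_left, zero_le, ↓reduceIte,
      Nat.reduceSubDiff, coeff_derivative]
    ring

lemma natDegree_legendreOp_le (p : ℝ[X]) : (legendreOp p).natDegree ≤ p.natDegree := by
  refine natDegree_le_iff_coeff_eq_zero.mpr fun j hj => ?_
  rw [coeff_legendreOp, coeff_eq_zero_of_natDegree_lt hj,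
    coeff_eq_zero_of_natDegree_lt (by omega : p.natDegree < j + 2)]
  ring

lemma integral_legendreOp_mul (p w : ℝ[X]) :
    ∫ x in (-1 : ℝ)..1, (legendreOp p).eval x * w.eval x =
      -∫ x in (-1 : ℝ)..1, ((1 - X ^ 2) * derivative p).eval x * (derivative w).eval x := by
  rw [legendreOp, integral_derivative_mul]
  simp

lemma integral_legendreOp_mul_comm (p w : ℝ[X]) :
    ∫ x in (-1 : ℝ)..1, (legendreOp p).eval x * w.eval x =
      ∫ x in (-1 : ℝ)..1, p.eval x * (legendreOp w).eval x := by
  rw [integral_congr fun x _ => mul_comm (p.eval x) _, integral_legendreOp_mul,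
    integral_legendreOp_mul]
  congr 1
  exact integral_congr fun x _ => by simp only [eval_mul]; ring

lemma legendreOp_leg (m : ℕ) : legendreOp (leg m) = (-(m * (m + 1) : ℝ)) • leg m := by
  have hperp (w : ℝ[X]) (hw : w.natDegree < m) :
      ∫ x in (-1 : ℝ)..1, (legendreOp (leg m)).eval x * w.eval x = 0 := by
    rw [integral_legendreOp_mul_comm]
    exact integral_leg_mul_eq_zero_of_natDegree_lt ((natDegree_legendreOp_le w).trans_lt hw)
  rw [eq_smul_leg_of_orthogonal ((natDegree_legendreOp_le _).trans (natDegree_leg_le m)) hperp,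
    coeff_legendreOp, coeff_eq_zero_of_natDegree_lt (by linarith [natDegree_leg_le m]),
    mul_zero, zero_sub]
  congr 1
  field_simp [coeff_leg_self_ne_zero m]

lemma derivative_leg_eval_one (m : ℕ) : (derivative (leg m)).eval 1 = m * (m + 1) / 2 := by
  have h := congrArg (eval 1) (legendreOp_leg m)
  simp only [legendreOp, derivative_mul, derivative_sub, derivative_one, derivative_X_pow_succ,
    Nat.cast_one, map_add, map_one, pow_one, zero_sub, neg_mul, eval_add, eval_neg, eval_mul,
    eval_one, eval_X, mul_one, eval_sub, eval_pow, one_pow, sub_self, zero_mul, add_zero, neg_smul,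
    eval_smul, leg_eval_one, smul_eq_mul, neg_inj] at h
  linarith

lemma leg_succ_sub_leg_pred_eval_neg_one {k : ℕ} (hk : 1 ≤ k) :
    (leg (k + 1) - leg (k - 1)).eval (-1) = 0 := by
  obtain ⟨n, rfl⟩ := Nat.exists_eq_add_of_le' hk
  simp [leg_eval_neg_one, pow_succ]

lemma derivative_leg_succ_sub_leg_pred {k : ℕ} (hk : 1 ≤ k) :
    derivative (leg (k + 1) - leg (k - 1)) = (2 * k + 1 : ℝ) • leg k := by
  set d := leg (k + 1) - leg (k - 1)
  have hd : d.natDegree ≤ k + 1 := (natDegree_sub_le _ _).trans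
    (max_le (natDegree_leg_le (k + 1)) ((natDegree_leg_le (k - 1)).trans (by omega)))
  have hdeg : (derivative d).natDegree ≤ k := (natDegree_derivative_le d).trans (by omega)
  have hperp (w : ℝ[X]) (hw : w.natDegree < k) :
      ∫ x in (-1 : ℝ)..1, (derivative d).eval x * w.eval x = 0 := by
    have hw' (j : ℕ) (hj : k ≤ j + 1) : derivative^[j] (derivative w) = 0 := by
      rw [← Function.iterate_succ_apply]
      exact iterate_derivative_eq_zero (by omega)
    rw [integral_derivative_mul, leg_succ_sub_leg_pred_eval_neg_one hk, integral_eval_sub_mul,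
      integral_leg_mul_eq_zero (hw' _ (by omega)), integral_leg_mul_eq_zero (hw' _ (by omega))]
    simp [d, leg_eval_one]
  rw [eq_eval_one_smul_leg_of_orthogonal hdeg hperp]
  congr 1
  simp only [d, derivative_sub, eval_sub, derivative_leg_eval_one]
  rw [Nat.cast_sub hk]
  push_cast
  ring

noncomputable def sonine (m : ℕ) : ℝ[X] :=
  C ((m : ℝ) * (m + 1)) * leg m ^ 2 + (1 - X ^ 2) * derivative (leg m) ^ 2

lemma derivative_sonine (m : ℕ) : derivative (sonine m) = X * (2 * derivative (leg m) ^ 2) := by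
  have hode := legendreOp_leg m
  rw [legendreOp, smul_eq_C_mul, derivative_mul] at hode
  simp only [derivative_sub, derivative_one, derivative_X_sq, map_neg, map_ofNat] at hode
  simp only [sonine, derivative_add, derivative_mul, derivative_C, derivative_sq, derivative_sub,
    derivative_one, derivative_X, map_ofNat]
  linear_combination (2 * derivative (leg m)) * hode

lemma abs_leg_eval_le_one (m : ℕ) {x : ℝ} (hx : x ∈ Icc (-1) 1) : |(leg m).eval x| ≤ 1 := by
  rcases Nat.eq_zero_or_pos m with rfl | hm
  · simp [leg]
  set N : ℝ := m * (m + 1)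
  have hN : 0 < N := by positivity
  have hG_le : (sonine m).eval x ≤ N := by
    have h := eval_le_max_of_derivative_eq_X_mul (derivative_sonine m)
      (fun y => by simp only [eval_mul, eval_ofNat, eval_pow]; positivity)
      (by norm_num) zero_le_one hx
    simpa [sonine, leg_eval_one, leg_eval_neg_one, ← pow_mul, pow_mul'] using h
  have hG_ge : N * (leg m).eval x ^ 2 ≤ (sonine m).eval x := by
    have : 0 ≤ (1 - x ^ 2) * (derivative (leg m)).eval x ^ 2 :=
      mul_nonneg (by nlinarith [hx.1, hx.2]) (sq_nonneg _)
    simp only [sonine, eval_add, eval_mul, eval_C, eval_pow, eval_sub, eval_one, eval_X]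
    linarith
  rw [← sq_le_one_iff_abs_le_one]
  nlinarith

lemma Dinv_leg {k : ℕ} (hk : 1 ≤ k) :
    Dinv (fun t => (leg k).eval t) =
      fun s => ((1 / (2 * k + 1) : ℝ) • (leg (k + 1) - leg (k - 1))).eval s := by
  have hk' : (2 * k + 1 : ℝ) ≠ 0 := by positivity
  have hleg : leg k = (1 / (2 * k + 1) : ℝ) • derivative (leg (k + 1) - leg (k - 1)) := by
    rw [derivative_leg_succ_sub_leg_pred hk, smul_smul, one_div_mul_cancel hk', one_smul]
  ext s
  simp only [Dinv, hleg, eval_smul, smul_eq_mul]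
  rw [integral_const_mul, integral_eval_derivative, leg_succ_sub_leg_pred_eval_neg_one hk, sub_zero]

lemma IsRadauNeg.eq {k : ℕ} {v : ℝ → ℝ} {p q : ℝ[X]}
    (hv : IntervalIntegrable v MeasureTheory.volume (-1) 1)
    (hp : IsRadauNeg k v p) (hq : IsRadauNeg k v q) : p = q := by
  obtain ⟨hp_deg, hp_perp, hp_one⟩ := hp
  obtain ⟨hq_deg, hq_perp, hq_one⟩ := hq
  have hperp (w : ℝ[X]) (hw : w.natDegree < k) :
      ∫ x in (-1 : ℝ)..1, (p - q).eval x * w.eval x = 0 := by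
    have hint (r : ℝ[X]) : IntervalIntegrable (fun x => (v x - r.eval x) * w.eval x)
        MeasureTheory.volume (-1) 1 :=
      (hv.sub (r.continuous.intervalIntegrable _ _)).mul_continuousOn w.continuous.continuousOn
    have hsplit : EqOn (fun x => (p - q).eval x * w.eval x)
        (fun x => (v x - q.eval x) * w.eval x - (v x - p.eval x) * w.eval x) (uIcc (-1) 1) :=
      fun x _ => by simp only [eval_sub]; ring
    rw [integral_congr hsplit, integral_sub (hint q) (hint p), hq_perp w hw, hp_perp w hw,
      sub_zero]
  have h := eq_eval_one_smul_leg_of_orthogonal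
    ((natDegree_sub_le _ _).trans (max_le hp_deg hq_deg)) hperp
  rwa [eval_sub, hp_one, hq_one, sub_self, zero_smul, sub_eq_zero] at h

lemma isRadauNeg_Dinv_leg {k : ℕ} (hk : 1 ≤ k) :
    IsRadauNeg k (Dinv fun t => (leg k).eval t)
      ((1 / (2 * k + 1) : ℝ) • (leg k - leg (k - 1))) := by
  refine ⟨(natDegree_smul_le _ _).trans <| (natDegree_sub_le _ _).trans <|
      max_le (natDegree_leg_le k) ((natDegree_leg_le (k - 1)).trans (by omega)), fun w hw => ?_,
    by simp [Dinv_leg hk, leg_eval_one]⟩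
  have hsplit : EqOn (fun s => (Dinv (fun t => (leg k).eval t) s -
        ((1 / (2 * k + 1) : ℝ) • (leg k - leg (k - 1))).eval s) * w.eval s)
      (fun s => (1 / (2 * k + 1) : ℝ) * ((leg (k + 1) - leg k).eval s * w.eval s))
      (uIcc (-1) 1) :=
    fun s _ => by simp only [Dinv_leg hk, eval_smul, eval_sub, smul_eq_mul]; ring
  rw [integral_congr hsplit, integral_const_mul, integral_eval_sub_mul,
    integral_leg_mul_eq_zero_of_natDegree_lt (by omega),
    integral_leg_mul_eq_zero_of_natDegree_lt hw]
  simp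

theorem F2_formula (k : ℕ) (hk : 1 ≤ k) (F₂ : Polynomial ℝ)
    (hF₂ : IsRadauNeg k (Dinv fun t => (leg k).eval t) F₂) :
    F₂ = (1 / (2 * k + 1) : ℝ) • (leg k - leg (k - 1)) ∧
    F₂.eval 1 = 0 ∧
    ∀ s ∈ Set.Icc (-1 : ℝ) 1, |F₂.eval s| ≤ 2 / (2 * k + 1) := by
  have hDinv : IntervalIntegrable (Dinv fun t => (leg k).eval t) MeasureTheory.volume (-1) 1 := by
    rw [Dinv_leg hk]
    exact (Polynomial.continuous _).intervalIntegrable _ _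
  obtain rfl := hF₂.eq hDinv (isRadauNeg_Dinv_leg hk)
  refine ⟨rfl, by simp [leg_eval_one], fun s hs => ?_⟩
  rw [eval_smul, smul_eq_mul, abs_mul, abs_of_pos (by positivity), eval_sub, one_div_mul_eq_div]
  gcongr
  calc |(leg k).eval s - (leg (k - 1)).eval s| ≤ |(leg k).eval s| + |(leg (k - 1)).eval s| :=
        abs_sub _ _
    _ ≤ 1 + 1 := add_le_add (abs_leg_eval_le_one k hs) (abs_leg_eval_le_one (k - 1) hs)
    _ = 2 := by norm_num
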